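/- In the PBM-GSP mechanism with a single slot (w_1 > 0 and w_k = 0 for all k ≥ 2), for every advertiser i and every keyword s, bidding b_i^s = v_i^s on keyword s is weakly dominant: for every bid profile b of all advertisers, replacing the s-coordinate of b_i by v_i^s (keeping all other coordinates of b fixed) does not decrease u_i. -/

import Mathlib

/-!
Advertiser `i`'s utility splits over keywords: since `v_i^s` is the `π`-weighted average of
the per-query values, `u_i` is the sum over `s` of the mass of `s` times `i`'s utility in a
single-keyword GSP auction where he values a click at `v_i^s`. With one slot this auction is a
second-price auction: a winner pays the highest competing bid `h`, so every bid earns either `0`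
or `w_1 (v_i^s - h)`, and the truthful bid earns the larger of the two.
-/

open Finset MeasureTheory

noncomputable section

namespace PBM

attribute [local instance] Classical.propDecidable

/-- 0-indexed rank of advertiser `i` among the advertisers with a positive bid
(higher bid first, ties broken by smaller index). -/
def rank {n : ℕ} (bs : Fin n → ℝ) (i : Fin n) : ℕ :=
  (Finset.univ.filter fun j => 0 < bs j ∧ (bs i < bs j ∨ (bs j = bs i ∧ j < i))).card

/-- 0-indexed rank of `i` among all coordinates of `x` (decreasing, ties by index). -/
def rankAll {n : ℕ} (x : Fin n → ℝ) (i : Fin n) : ℕ :=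
  (Finset.univ.filter fun j => x i < x j ∨ (x j = x i ∧ j < i)).card

/-- click probability of the slot obtained by `i` (0 if `i` places no positive bid). -/
def slotW {n : ℕ} (w : ℕ → ℝ) (bs : Fin n → ℝ) (i : Fin n) : ℝ :=
  if 0 < bs i then w (rank bs i) else 0

/-- GSP per-click payment of `i`: the bid of the advertiser ranked right below `i`
(0 if there is none). -/
def pay {n : ℕ} (bs : Fin n → ℝ) (i : Fin n) : ℝ :=
  ∑ j ∈ Finset.univ.filter (fun j => 0 < bs j ∧ rank bs j = rank bs i + 1), bs j

/-- utility of bidder `i` in the single-keyword GSP game with values `vv`. -/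
def gspUtil {n : ℕ} (w : ℕ → ℝ) (vv : Fin n → ℝ) (bs : Fin n → ℝ) (i : Fin n) : ℝ :=
  slotW w bs i * (vv i - pay bs i)

variable {Q S : Type*} [Fintype Q] [Fintype S]

/-- expected value of keyword `s` for an advertiser with per-query valuations `vq`. -/
def kwVal (P : Q → ℝ) (pi : Q → S → ℝ) (vq : Q → ℝ) (s : S) : ℝ :=
  (∑ q, pi q s * vq q * P q) / (∑ q, pi q s * P q)

/-- probability mass of keyword `s`. -/
def mass (P : Q → ℝ) (pi : Q → S → ℝ) (s : S) : ℝ := ∑ q, pi q s * P q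

/-- expected utility of advertiser `i` in PBM-GSP. -/
def util {n : ℕ} (P : Q → ℝ) (pi : Q → S → ℝ) (w : ℕ → ℝ)
    (v : Fin n → Q → ℝ) (b : Fin n → S → ℝ) (i : Fin n) : ℝ :=
  ∑ q, P q * ∑ s, pi q s *
    (slotW w (fun j => b j s) i * (v i q - pay (fun j => b j s) i))

/-- social welfare of bid profile `b` in PBM-GSP. -/
def SW {n : ℕ} (P : Q → ℝ) (pi : Q → S → ℝ) (w : ℕ → ℝ)
    (v : Fin n → Q → ℝ) (b : Fin n → S → ℝ) : ℝ :=
  ∑ q, P q * ∑ s, pi q s * ∑ i, slotW w (fun j => b j s) i * v i q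

/-- optimal social welfare. -/
def SWopt {n : ℕ} (P : Q → ℝ) (w : ℕ → ℝ) (v : Fin n → Q → ℝ) : ℝ :=
  ∑ q, P q * ∑ i, w (rankAll (fun j => v j q) i) * v i q

/-- welfare of the truthful keyword-bid profile `𝔳` (each advertiser bids his
expected keyword value on every keyword, no `κ` constraint). -/
def SWtruth {n : ℕ} (P : Q → ℝ) (pi : Q → S → ℝ) (w : ℕ → ℝ)
    (v : Fin n → Q → ℝ) : ℝ :=
  ∑ q, P q * ∑ s, pi q s *
    ∑ i, w (rankAll (fun j => kwVal P pi (v j) s) i) * kwVal P pi (v i) s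

/-- a bid vector is valid if it is nonnegative and positive on at most `κ` keywords. -/
def ValidBid (κ : ℕ) (bi : S → ℝ) : Prop :=
  (∀ s, 0 ≤ bi s) ∧ ((Finset.univ.filter fun s => 0 < bi s).card ≤ κ)

/-- a bid profile is conservative if everybody bids at most his expected keyword value. -/
def Conservative {n : ℕ} (P : Q → ℝ) (pi : Q → S → ℝ)
    (v : Fin n → Q → ℝ) (b : Fin n → S → ℝ) : Prop :=
  ∀ i s, b i s ≤ kwVal P pi (v i) s

/-- `β`-keyword-level expressiveness for valuation profile `v`. -/
def KLExpressive {n : ℕ} (pi : Q → S → ℝ) (v : Fin n → Q → ℝ) (κ : ℕ) (β : ℝ) : Prop :=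
  ∀ i : Fin n,
    β * ((Finset.univ.filter fun s : S => ∃ q, 0 < pi q s ∧ 0 < v i q).card : ℝ) ≤ (κ : ℝ)

/-- expected utility of advertiser `i` in PBM-GSP with reserve price vector `r`. -/
def utilR {n : ℕ} (P : Q → ℝ) (pi : Q → S → ℝ) (w : ℕ → ℝ) (r : S → ℝ)
    (v : Fin n → Q → ℝ) (b : Fin n → S → ℝ) (i : Fin n) : ℝ :=
  ∑ q, P q * ∑ s, pi q s *
    (if 0 < b i s ∧ r s ≤ b i s then
       w (rank (fun j => b j s) i) * (v i q - max (r s) (pay (fun j => b j s) i))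
     else 0)

/-- revenue of PBM-GSP with reserve price vector `r`. -/
def revenue {n : ℕ} (P : Q → ℝ) (pi : Q → S → ℝ) (w : ℕ → ℝ) (r : S → ℝ)
    (b : Fin n → S → ℝ) : ℝ :=
  ∑ q, P q * ∑ s, pi q s * ∑ i,
    (if 0 < b i s ∧ r s ≤ b i s then
       w (rank (fun j => b j s) i) * max (r s) (pay (fun j => b j s) i)
     else 0)

/-- reserve-restricted social welfare of PBM-GSP with reserve price vector `r`. -/
def SWres {n : ℕ} (P : Q → ℝ) (pi : Q → S → ℝ) (w : ℕ → ℝ) (r : S → ℝ)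
    (v : Fin n → Q → ℝ) (b : Fin n → S → ℝ) : ℝ :=
  ∑ q, P q * ∑ s, pi q s * ∑ i,
    (if 0 < b i s ∧ r s ≤ b i s then w (rank (fun j => b j s) i) * v i q else 0)

/-- marginal CDF on keyword `s` of a distribution `T` of keyword-valuation vectors. -/
def cdfT (T : Measure (S → ℝ)) (s : S) (x : ℝ) : ℝ :=
  ((T.map fun f => f s) (Set.Iic x)).toReal

/-- the virtual value function `φ_s(x) = x - (1 - T_s(x))/t_s(x)`. -/
def virt (T : Measure (S → ℝ)) (td : S → ℝ → ℝ) (s : S) (x : ℝ) : ℝ :=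
  x - (1 - cdfT T s x) / td s x

/-- `td s` is the density of the marginal of `T` on keyword `s`. -/
def HasDensity (T : Measure (S → ℝ)) (td : S → ℝ → ℝ) : Prop :=
  ∀ s : S, T.map (fun f => f s)
    = MeasureTheory.volume.withDensity (fun x => ENNReal.ofReal (td s x))

/-- `r` is the vector of Myerson reserve prices. -/
def MyersonReserve (T : Measure (S → ℝ)) (td : S → ℝ → ℝ) (r : S → ℝ) : Prop :=
  ∀ s : S, 0 ≤ r s ∧ virt T td s (r s) = 0

/-- `T` is an MHR distribution with bounded derivative `η`. -/
def MHRBounded (T : Measure (S → ℝ)) (td : S → ℝ → ℝ) (r : S → ℝ) (η : ℝ) : Prop :=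
  ∀ s : S, (∀ x : ℝ, 0 ≤ x → DifferentiableAt ℝ (virt T td s) x) ∧
    (∀ x : ℝ, 0 ≤ x → 1 ≤ deriv (virt T td s) x) ∧
    (∀ x : ℝ, r s ≤ x → deriv (virt T td s) x ≤ η)

/-- `T` has a monotone hazard rate. -/
def MHRhazard (T : Measure (S → ℝ)) (td : S → ℝ → ℝ) : Prop :=
  ∀ s : S, MonotoneOn (fun x => td s x / (1 - cdfT T s x))
    {x : ℝ | 0 ≤ x ∧ cdfT T s x < 1}

/-- expected revenue (per valuation profile) of PBM-VCG with reserve prices, via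
Myerson's lemma: virtual-value surplus of the welfare-maximizing allocation. -/
def revVCG {n : ℕ} (P : Q → ℝ) (pi : Q → S → ℝ) (w : ℕ → ℝ)
    (T : Measure (S → ℝ)) (td : S → ℝ → ℝ) (v : Fin n → Q → ℝ) : ℝ :=
  ∑ s, mass P pi s * ∑ i, w (rankAll (fun j => kwVal P pi (v j) s) i) *
    (if 0 < virt T td s (kwVal P pi (v i) s) then virt T td s (kwVal P pi (v i) s) else 0)

end PBM

namespace PBM

variable {n : ℕ}

def Beats (bs : Fin n → ℝ) (k j : Fin n) : Prop :=
  bs j < bs k ∨ (bs k = bs j ∧ k < j)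

lemma beats_irrefl (bs : Fin n → ℝ) (j : Fin n) : ¬ Beats bs j j := by
  simp [Beats]

lemma Beats.asymm {bs : Fin n → ℝ} {j k : Fin n} (h : Beats bs j k) : ¬ Beats bs k j := by
  unfold Beats at *
  grind

def Wins (bs : Fin n → ℝ) (i : Fin n) : Prop :=
  0 < bs i ∧ rank bs i = 0

-- The price a winner pays: the highest competing bid, or `0` if nobody else bids positively.
def rivalBid (bs : Fin n → ℝ) (i : Fin n) : ℝ :=
  (insert 0 ((univ.erase i).image bs)).max' (insert_nonempty _ _)

lemma zero_le_rivalBid (bs : Fin n → ℝ) (i : Fin n) : 0 ≤ rivalBid bs i :=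
  le_max' _ _ (mem_insert_self _ _)

lemma le_rivalBid (bs : Fin n → ℝ) {i j : Fin n} (hji : j ≠ i) : bs j ≤ rivalBid bs i :=
  le_max' _ _ (mem_insert_of_mem (mem_image_of_mem _ (mem_erase.2 ⟨hji, mem_univ _⟩)))

lemma rivalBid_eq_zero_or_exists (bs : Fin n → ℝ) (i : Fin n) :
    rivalBid bs i = 0 ∨ ∃ j ≠ i, bs j = rivalBid bs i := by
  have h := max'_mem (insert 0 ((univ.erase i).image bs)) (insert_nonempty _ _)
  simp only [mem_insert, mem_image, mem_erase, mem_univ, and_true] at h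
  exact h

lemma rivalBid_update_self (bs : Fin n → ℝ) (i : Fin n) (x : ℝ) :
    rivalBid (Function.update bs i x) i = rivalBid bs i := by
  unfold rivalBid
  congr 2
  exact image_congr fun j hj => Function.update_of_ne (mem_erase.1 hj).1 x bs

lemma mem_rank_filter {bs : Fin n → ℝ} {j k : Fin n} :
    k ∈ univ.filter (fun k => 0 < bs k ∧ (bs j < bs k ∨ (bs k = bs j ∧ k < j))) ↔
      0 < bs k ∧ Beats bs k j := by
  simp [Beats]

lemma not_beats_of_rank_eq_zero {bs : Fin n → ℝ} {i k : Fin n} (hi : rank bs i = 0)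
    (hk : 0 < bs k) : ¬ Beats bs k i := fun hki =>
  (card_eq_zero.1 hi ▸ notMem_empty k) (mem_rank_filter.2 ⟨hk, hki⟩)

lemma beats_of_rank_eq_zero {bs : Fin n → ℝ} {i j : Fin n} (hi : rank bs i = 0)
    (hj : 0 < bs j) (hji : j ≠ i) : Beats bs i j := by
  have := not_beats_of_rank_eq_zero hi hj
  unfold Beats at *
  rcases lt_or_gt_of_ne hji with h | h <;> grind

lemma two_le_rank {bs : Fin n → ℝ} {j k l : Fin n} (hk : 0 < bs k) (hl : 0 < bs l)
    (hkl : k ≠ l) (hkj : Beats bs k j) (hlj : Beats bs l j) : 2 ≤ rank bs j := by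
  calc 2 = ({k, l} : Finset (Fin n)).card := (card_pair hkl).symm
    _ ≤ rank bs j := card_le_card fun x hx => by
      rcases mem_insert.1 hx with rfl | hx
      · exact mem_rank_filter.2 ⟨hk, hkj⟩
      · exact mem_rank_filter.2 (mem_singleton.1 hx ▸ ⟨hl, hlj⟩)

lemma wins_of_rivalBid_lt {bs : Fin n → ℝ} {i : Fin n} (h : rivalBid bs i < bs i) :
    Wins bs i := by
  refine ⟨(zero_le_rivalBid bs i).trans_lt h, card_eq_zero.2 (filter_eq_empty_iff.2 ?_)⟩
  rintro k - ⟨-, hki⟩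
  have hk : k ≠ i := by rintro rfl; simp at hki
  have := le_rivalBid bs hk
  rcases hki with hki | ⟨hki, -⟩ <;> linarith

lemma rivalBid_le_of_wins {bs : Fin n → ℝ} {i : Fin n} (h : Wins bs i) :
    rivalBid bs i ≤ bs i := by
  rcases rivalBid_eq_zero_or_exists bs i with h0 | ⟨j, hji, hj⟩
  · exact h0 ▸ h.1.le
  · by_contra! hlt
    exact not_beats_of_rank_eq_zero h.2 (h.1.trans (hj ▸ hlt)) (Or.inl (hj ▸ hlt))

lemma pay_eq_zero_of_rivalBid_eq_zero {bs : Fin n → ℝ} {i : Fin n} (h : Wins bs i)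
    (h0 : rivalBid bs i = 0) : pay bs i = 0 := by
  refine sum_eq_zero fun j hj => ?_
  obtain ⟨hj, hrj⟩ := mem_filter.1 hj |>.2
  have hji : j ≠ i := by rintro rfl; omega
  linarith [le_rivalBid bs hji]

lemma pay_eq_of_beats_others {bs : Fin n → ℝ} {i m : Fin n} (h : Wins bs i) (hm : 0 < bs m)
    (hmi : m ≠ i) (hbeat : ∀ j, 0 < bs j → j ≠ i → j ≠ m → Beats bs m j) :
    pay bs i = bs m := by
  have hrm : rank bs m = 1 := by
    refine card_eq_one.2 ⟨i, ext fun k => ?_⟩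
    rw [mem_rank_filter, mem_singleton]
    constructor
    · rintro ⟨hk, hkm⟩
      by_contra hki
      have hkm' : k ≠ m := by rintro rfl; exact beats_irrefl bs k hkm
      exact (hbeat k hk hki hkm').asymm hkm
    · rintro rfl
      exact ⟨h.1, beats_of_rank_eq_zero h.2 hm hmi⟩
  have hset : univ.filter (fun j => 0 < bs j ∧ rank bs j = rank bs i + 1) = {m} := by
    ext j
    simp only [mem_filter, mem_univ, true_and, mem_singleton, h.2]
    constructor
    · rintro ⟨hj, hrj⟩
      by_contra hjm
      have hji : j ≠ i := by rintro rfl; rw [h.2] at hrj; omega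
      have := two_le_rank h.1 hm hmi.symm (beats_of_rank_eq_zero h.2 hj hji) (hbeat j hj hji hjm)
      omega
    · rintro rfl
      exact ⟨hm, hrm⟩
  unfold pay
  rw [hset, sum_singleton]

lemma pay_eq_rivalBid_of_wins {bs : Fin n → ℝ} {i : Fin n} (h : Wins bs i) :
    pay bs i = rivalBid bs i := by
  rcases (zero_le_rivalBid bs i).eq_or_lt with h0 | hpos
  · rw [← h0, pay_eq_zero_of_rivalBid_eq_zero h h0.symm]
  -- the runner-up is the smallest-index rival bidding `rivalBid bs i`
  set M := univ.filter fun j => j ≠ i ∧ bs j = rivalBid bs i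
  have hM : M.Nonempty := by
    obtain ⟨j, hji, hj⟩ := (rivalBid_eq_zero_or_exists bs i).resolve_left hpos.ne'
    exact ⟨j, mem_filter.2 ⟨mem_univ _, hji, hj⟩⟩
  obtain ⟨hmi, hm⟩ := (mem_filter.1 (M.min'_mem hM)).2
  rw [← hm]
  refine pay_eq_of_beats_others h (hm ▸ hpos) hmi fun j hj hji hjm => ?_
  rcases (le_rivalBid bs hji).lt_or_eq with hlt | heq
  · exact Or.inl (hm ▸ hlt)
  · exact Or.inr ⟨hm.trans heq.symm,
      (M.min'_le j (mem_filter.2 ⟨mem_univ _, hji, heq⟩)).lt_of_ne (Ne.symm hjm)⟩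

section SingleSlot

open scoped Classical

variable {w : ℕ → ℝ}

lemma slotW_eq_ite_wins (hwk : ∀ k, 1 ≤ k → w k = 0) (bs : Fin n → ℝ) (i : Fin n) :
    slotW w bs i = if Wins bs i then w 0 else 0 := by
  unfold slotW Wins
  by_cases hb : 0 < bs i
  · by_cases hr : rank bs i = 0
    · simp [hb, hr]
    · simp [hb, hr, hwk _ (Nat.one_le_iff_ne_zero.2 hr)]
  · simp [hb]

lemma gspUtil_eq_ite_wins (hwk : ∀ k, 1 ≤ k → w k = 0) (vv bs : Fin n → ℝ) (i : Fin n) :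
    gspUtil w vv bs i = if Wins bs i then w 0 * (vv i - rivalBid bs i) else 0 := by
  unfold gspUtil
  rw [slotW_eq_ite_wins hwk]
  split_ifs with h
  · rw [pay_eq_rivalBid_of_wins h]
  · rw [zero_mul]

lemma gspUtil_le_gspUtil_update_self (hwk : ∀ k, 1 ≤ k → w k = 0) (hw0 : 0 ≤ w 0)
    (vv bs : Fin n → ℝ) (i : Fin n) :
    gspUtil w vv bs i ≤ gspUtil w vv (Function.update bs i (vv i)) i := by
  have hrival := rivalBid_update_self bs i (vv i)
  have hbid : Function.update bs i (vv i) i = vv i := Function.update_self i _ bs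
  rw [gspUtil_eq_ite_wins hwk, gspUtil_eq_ite_wins hwk, hrival]
  -- truthful bidding earns `max 0 (w 0 * (vv i - rivalBid bs i))`, the best of the two outcomes
  split_ifs with hwin hwin' hwin'
  · exact le_rfl
  · have : vv i ≤ rivalBid bs i := by
      by_contra! hlt
      exact hwin' (wins_of_rivalBid_lt (by rwa [hrival, hbid]))
    exact mul_nonpos_of_nonneg_of_nonpos hw0 (sub_nonpos.2 this)
  · have := rivalBid_le_of_wins hwin'
    rw [hrival, hbid] at this
    exact mul_nonneg hw0 (sub_nonneg.2 this)
  · exact le_rfl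

end SingleSlot

section Keywords

variable {Q S : Type*} [Fintype Q] {P : Q → ℝ} {pi : Q → S → ℝ}

lemma mass_nonneg (hP0 : ∀ q, 0 ≤ P q) (hpi0 : ∀ q s, 0 ≤ pi q s) (s : S) :
    0 ≤ mass P pi s :=
  sum_nonneg fun q _ => mul_nonneg (hpi0 q s) (hP0 q)

lemma sum_mul_eq_kwVal_mul_mass (hP0 : ∀ q, 0 ≤ P q) (hpi0 : ∀ q s, 0 ≤ pi q s)
    (vq : Q → ℝ) (s : S) :
    ∑ q, pi q s * vq q * P q = kwVal P pi vq s * mass P pi s := by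
  rcases (mass_nonneg hP0 hpi0 s).eq_or_lt with h0 | hpos
  · have hq := (sum_eq_zero_iff_of_nonneg fun q _ => mul_nonneg (hpi0 q s) (hP0 q)).1 h0.symm
    rw [← h0, mul_zero]
    exact sum_eq_zero fun q hq' => by rw [mul_right_comm, hq q hq', zero_mul]
  · exact (div_mul_cancel₀ _ hpos.ne').symm

lemma util_eq_sum_mass_mul_gspUtil [Fintype S]
    (hP0 : ∀ q, 0 ≤ P q) (hpi0 : ∀ q s, 0 ≤ pi q s) {n : ℕ} (w : ℕ → ℝ) (v : Fin n → Q → ℝ) (b : Fin n → S → ℝ) (i : Fin n) :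
    util P pi w v b i =
      ∑ s, mass P pi s * gspUtil w (fun j => kwVal P pi (v j) s) (fun j => b j s) i := by
  unfold util
  simp_rw [mul_sum]
  rw [sum_comm]
  refine sum_congr rfl fun s _ => ?_
  set A := slotW w (fun j => b j s) i
  set p := pay (fun j => b j s) i
  calc ∑ q, P q * (pi q s * (A * (v i q - p)))
      = A * ∑ q, pi q s * v i q * P q - A * p * mass P pi s := by
        rw [mass, mul_sum, mul_sum, ← sum_sub_distrib]
        exact sum_congr rfl fun q _ => by ring
    _ = mass P pi s * (A * (kwVal P pi (v i) s - p)) := by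
        rw [sum_mul_eq_kwVal_mul_mass hP0 hpi0]
        ring

end Keywords

lemma update_update_self_apply {ι κ α : Type*} [DecidableEq ι] [DecidableEq κ]
    (b : ι → κ → α) (i : ι) (s : κ) (x : α) (t : κ) :
    (fun j => Function.update b i (Function.update (b i) s x) j t) =
      Function.update (fun j => b j t) i (Function.update (b i) s x t) := by
  ext j
  rcases eq_or_ne j i with rfl | hji <;> simp [*]

end PBM

open PBM in
theorem stmt1_general
    {Q S : Type*} [Fintype Q] [Fintype S] [DecidableEq S] {n : ℕ}
    (P : Q → ℝ) (pi : Q → S → ℝ) (w : ℕ → ℝ)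
    (hP0 : ∀ q, 0 ≤ P q)
    (hpi0 : ∀ q s, 0 ≤ pi q s)
    (hw0 : ∀ k, 0 ≤ w k)
    (hwk : ∀ k, 1 ≤ k → w k = 0)
    (v : Fin n → Q → ℝ)
    (b : Fin n → S → ℝ)
    (i : Fin n) (s : S) :
    util P pi w v b i ≤
      util P pi w v
        (Function.update b i (Function.update (b i) s (kwVal P pi (v i) s))) i := by
  rw [util_eq_sum_mass_mul_gspUtil hP0 hpi0, util_eq_sum_mass_mul_gspUtil hP0 hpi0]
  refine sum_le_sum fun t _ => ?_
  rw [update_update_self_apply]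
  rcases eq_or_ne t s with rfl | hts
  · rw [Function.update_self]
    exact mul_le_mul_of_nonneg_left (gspUtil_le_gspUtil_update_self hwk (hw0 0) _ _ i)
      (mass_nonneg hP0 hpi0 t)
  · rw [Function.update_of_ne hts, Function.update_eq_self]

open PBM in
/-- in single-slot PBM-GSP, bidding `b_i^s = v_i^s` on keyword `s`
is weakly dominant: replacing the `s`-coordinate of `b_i` by `v_i^s` never
decreases advertiser `i`'s utility, whatever the bid profile. -/
theorem stmt1
    {Q S : Type*} [Fintype Q] [Fintype S] [DecidableEq S] {n : ℕ}
    (P : Q → ℝ) (pi : Q → S → ℝ) (w : ℕ → ℝ) (κ : ℕ)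
    (hP0 : ∀ q, 0 ≤ P q) (hP1 : ∑ q, P q = 1)
    (hpi0 : ∀ q s, 0 ≤ pi q s) (hpi1 : ∀ q, ∑ s, pi q s = 1)
    (hS : ∀ s : S, ∃ q, 0 < pi q s)
    (hw0 : ∀ k, 0 ≤ w k) (hκ : 0 < κ)
    (hw1 : 0 < w 0) (hwk : ∀ k, 1 ≤ k → w k = 0)
    (v : Fin n → Q → ℝ) (hv0 : ∀ i q, 0 ≤ v i q)
    (b : Fin n → S → ℝ) (hb : ∀ j, ValidBid κ (b j))
    (i : Fin n) (s : S) :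
    util P pi w v b i ≤
      util P pi w v
        (Function.update b i (Function.update (b i) s (kwVal P pi (v i) s))) i :=
  stmt1_general P pi w hP0 hpi0 hw0 hwk v b i s
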